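/- Let T be a densely defined operator in a Hilbert space H that is C-symmetric with respect to a conjugation C, let F be a linear subspace of H that is a core for T*, and assume CF ⊆ dom(T̄), where T̄ is the closure of T. Then T̄ is C-selfadjoint: T̄ = C T* C. -/

import Mathlib

open InnerProductSpace in
/-- A conjugation on a complex inner product space: an antilinear involution
satisfying `⟪Cf, Cg⟫ = ⟪g, f⟫`. -/
structure Conjugation (H : Type*) [NormedAddCommGroup H] [InnerProductSpace ℂ H] where
  toFun : H → H
  map_add' : ∀ x y, toFun (x + y) = toFun x + toFun y
  map_smul' : ∀ (c : ℂ) (x : H), toFun (c • x) = (starRingEnd ℂ c) • toFun x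
  invol : ∀ x, toFun (toFun x) = x
  inner_map : ∀ x y, (inner ℂ (toFun x) (toFun y) : ℂ) = inner ℂ y x

/-- `T` is `C`-symmetric: `T ⊆ C T* C`. -/
noncomputable def CSymmetric {H : Type*} [NormedAddCommGroup H] [InnerProductSpace ℂ H]
    [CompleteSpace H] (C : Conjugation H) (T : H →ₗ.[ℂ] H) : Prop :=
  ∀ x : T.domain, ∃ hx : C.toFun x ∈ T.adjoint.domain,
    C.toFun (T.adjoint ⟨C.toFun x, hx⟩) = T x

/-- `T` is `C`-selfadjoint: `T = C T* C`. -/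
noncomputable def CSelfAdjoint {H : Type*} [NormedAddCommGroup H] [InnerProductSpace ℂ H]
    [CompleteSpace H] (C : Conjugation H) (T : H →ₗ.[ℂ] H) : Prop :=
  CSymmetric C T ∧ ∀ y : H, C.toFun y ∈ T.adjoint.domain → y ∈ T.domain

/-- Composition of partially defined linear maps, with its natural (maximal) domain. -/
noncomputable def LinearPMap.pcomp {R E F G : Type*} [Ring R] [AddCommGroup E] [Module R E]
    [AddCommGroup F] [Module R F] [AddCommGroup G] [Module R G]
    (g : F →ₗ.[R] G) (f : E →ₗ.[R] F) : E →ₗ.[R] G :=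
  g.comp (f.domRestrict ((g.domain.comap f.toFun).map f.domain.subtype))
    (by
      rintro ⟨x, hx1, hx2⟩
      obtain ⟨y, hy, hyx⟩ := hx1
      erw [LinearPMap.domRestrict_apply (y := y) (by exact hyx.symm)]
      exact hy)

/-- Natural powers of a partially defined linear map, `T^(n+1) = T ∘ T^n`, with
`T^0` the identity on the whole space. -/
noncomputable def LinearPMap.ppow {R E : Type*} [Ring R] [AddCommGroup E] [Module R E]
    (T : E →ₗ.[R] E) : ℕ → E →ₗ.[R] E
  | 0 => ⟨⊤, (⊤ : Submodule R E).subtype⟩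
  | n + 1 => T.pcomp (T.ppow n)

/-- `F` is a core for the (closed) operator `A`: `F ⊆ dom A` and the closure of the
restriction of `A` to `F` is `A` itself. -/
noncomputable def IsCoreFor {H : Type*} [NormedAddCommGroup H] [InnerProductSpace ℂ H]
    (F : Submodule ℂ H) (A : H →ₗ.[ℂ] H) : Prop :=
  F ≤ A.domain ∧ (A.domRestrict F).closure = A

/-!
A `C`-symmetric `T` is exactly one with `(C × C)(graph T) ⊆ graph T*`. Since `C` is a continuous
involution and `graph T*` is closed, this passes to the closure of `graph T`; hence `T` is closable
and `T̄` is again `C`-symmetric (as `T̄* = T*`). For the reverse inclusion `C T* C ⊆ T̄`, `C`-symmetry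
of `T̄` gives `(C × C)(graph T*|_F) ⊆ graph T̄` as soon as `C F ⊆ dom T̄`, and since `F` is a core
this extends to `(C × C)(graph T*) ⊆ graph T̄`.
-/

open Set LinearPMap

namespace Submodule

variable {𝕜 E F : Type*} [RCLike 𝕜] [NormedAddCommGroup E] [InnerProductSpace 𝕜 E]
  [NormedAddCommGroup F] [InnerProductSpace 𝕜 F]

theorem adjoint_topologicalClosure (g : Submodule 𝕜 (E × F)) :
    g.topologicalClosure.adjoint = g.adjoint := by
  ext x
  simp only [mem_adjoint_iff]
  refine ⟨fun h a b hab => h a b (g.le_topologicalClosure hab), fun h a b hab => ?_⟩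
  have hclosed : IsClosed {p : E × F | inner 𝕜 p.2 x.1 - inner 𝕜 p.1 x.2 = 0} :=
    isClosed_eq (by fun_prop) continuous_const
  exact closure_minimal (fun p hp => h p.1 p.2 hp) hclosed
    (by rwa [← g.topologicalClosure_coe])

end Submodule

namespace LinearPMap

variable {𝕜 E F : Type*} [RCLike 𝕜] [NormedAddCommGroup E] [InnerProductSpace 𝕜 E]
  [NormedAddCommGroup F] [InnerProductSpace 𝕜 F] [CompleteSpace E] {T : E →ₗ.[𝕜] F}

theorem IsClosable.adjoint_closure (hT : Dense (T.domain : Set E)) (hc : T.IsClosable) :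
    T.closure† = T† := by
  have hT' : Dense (T.closure.domain : Set E) := hT.mono (T.le_closure.1)
  refine eq_of_eq_graph ?_
  rw [adjoint_graph_eq_graph_adjoint hT, adjoint_graph_eq_graph_adjoint hT',
    ← hc.graph_closure_eq_closure_graph, Submodule.adjoint_topologicalClosure]

end LinearPMap

theorem LinearPMap.IsClosable.mapsTo_closure_graph {R E F E' F' : Type*} [CommRing R]
    [AddCommGroup E] [AddCommGroup F] [AddCommGroup E'] [AddCommGroup F'] [Module R E]
    [Module R F] [Module R E'] [Module R F'] [TopologicalSpace E] [TopologicalSpace F]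
    [TopologicalSpace E'] [TopologicalSpace F'] [ContinuousAdd E] [ContinuousAdd F]
    [TopologicalSpace R] [ContinuousSMul R E] [ContinuousSMul R F]
    {A : E →ₗ.[R] F} {B : E' →ₗ.[R] F'} {f : E × F → E' × F'} (hA : A.IsClosable)
    (hB : B.IsClosed) (hf : Continuous f) (h : MapsTo f A.graph B.graph) :
    MapsTo f A.closure.graph B.graph := by
  rw [← hA.graph_closure_eq_closure_graph, Submodule.topologicalClosure_coe]
  exact h.closure_left hf hB

namespace Conjugation

variable {H : Type*} [NormedAddCommGroup H] [InnerProductSpace ℂ H] (C : Conjugation H)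

def toAddMonoidHom : H →+ H := AddMonoidHom.mk' C.toFun C.map_add'

theorem map_zero : C.toFun 0 = 0 := C.toAddMonoidHom.map_zero

theorem norm_map (x : H) : ‖C.toFun x‖ = ‖x‖ := by
  have h := C.inner_map x x
  rw [inner_self_eq_norm_sq_to_K, inner_self_eq_norm_sq_to_K] at h
  exact (pow_left_inj₀ (norm_nonneg _) (norm_nonneg _) two_ne_zero).1 (by exact_mod_cast h)

theorem isometry : Isometry C.toFun :=
  AddMonoidHomClass.isometry_of_norm C.toAddMonoidHom C.norm_map

theorem continuous_prodMap : Continuous (Prod.map C.toFun C.toFun) :=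
  C.isometry.continuous.prodMap C.isometry.continuous

end Conjugation

theorem cSymmetric_iff_mapsTo_graph {H : Type*} [NormedAddCommGroup H] [InnerProductSpace ℂ H]
    [CompleteSpace H] {C : Conjugation H} {T : H →ₗ.[ℂ] H} :
    CSymmetric C T ↔ MapsTo (Prod.map C.toFun C.toFun) T.graph T†.graph := by
  refine ⟨fun hsym p hp => ?_, fun h x => ?_⟩
  · obtain ⟨x, rfl⟩ := T.mem_graph_iff'.1 hp
    obtain ⟨hx, hTx⟩ := hsym x
    rw [← hTx]
    simpa [C.invol] using T†.mem_graph ⟨_, hx⟩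
  · obtain ⟨y, hy, hTy⟩ := T†.mem_graph_iff.1 (h (T.mem_graph x))
    simp only [Prod.map_apply] at hy hTy
    refine ⟨hy ▸ y.2, ?_⟩
    simp_rw [← hy, hTy]
    exact C.invol _

namespace CSymmetric

variable {H : Type*} [NormedAddCommGroup H] [InnerProductSpace ℂ H] [CompleteSpace H]
  {C : Conjugation H} {T : H →ₗ.[ℂ] H}

theorem isClosable (hT : Dense (T.domain : Set H)) (hsym : CSymmetric C T) : T.IsClosable := by
  refine ⟨T.graph.topologicalClosure.toLinearPMap,
    (Submodule.toLinearPMap_graph_eq _ fun p hp hp1 => ?_).symm⟩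
  have hmaps : MapsTo (Prod.map C.toFun C.toFun) (_root_.closure T.graph) T†.graph :=
    (cSymmetric_iff_mapsTo_graph.1 hsym).closure_left C.continuous_prodMap
      (adjoint_isClosed hT)
  have hCp2 : C.toFun p.2 = 0 :=
    T†.graph_fst_eq_zero_snd (hmaps hp) (by rw [hp1, C.map_zero])
  rw [← C.invol p.2, hCp2, C.map_zero]

theorem closure (hT : Dense (T.domain : Set H)) (hsym : CSymmetric C T) :
    CSymmetric C T.closure := by
  rw [cSymmetric_iff_mapsTo_graph, (hsym.isClosable hT).adjoint_closure hT]
  exact (hsym.isClosable hT).mapsTo_closure_graph (adjoint_isClosed hT)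
    C.continuous_prodMap (cSymmetric_iff_mapsTo_graph.1 hsym)

theorem prodMap_mem_graph (hsym : CSymmetric C T) {p : H × H} (hp : p ∈ T†.graph)
    (hdom : C.toFun p.1 ∈ T.domain) : Prod.map C.toFun C.toFun p ∈ T.graph := by
  have h := cSymmetric_iff_mapsTo_graph.1 hsym (T.mem_graph ⟨_, hdom⟩)
  rw [Prod.map, C.invol] at h
  have hp2 : p.2 = C.toFun (T ⟨_, hdom⟩) := T†.mem_graph_snd_inj hp h rfl
  rw [Prod.map, hp2, C.invol]
  exact T.mem_graph ⟨_, hdom⟩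

end CSymmetric

/-- if `T` is densely defined and `C`-symmetric, `F` is a core for `T*`,
and `C F ⊆ dom T̄`, then the closure `T̄` is `C`-selfadjoint. -/
theorem stmt_11 {H : Type*} [NormedAddCommGroup H] [InnerProductSpace ℂ H] [CompleteSpace H]
    (C : Conjugation H) (T : H →ₗ.[ℂ] H)
    (hdense : Dense (T.domain : Set H)) (hsym : CSymmetric C T)
    (F : Submodule ℂ H) (hcore : IsCoreFor F T.adjoint)
    (hCF : ∀ x ∈ F, C.toFun x ∈ T.closure.domain) :
    CSelfAdjoint C T.closure := by
  have hclos := hsym.isClosable hdense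
  have hsym' := hsym.closure hdense
  have hadj := hclos.adjoint_closure hdense
  have hmaps : MapsTo (Prod.map C.toFun C.toFun) T†.graph T.closure.graph := by
    rw [← hcore.2]
    refine ((adjoint_isClosed hdense).isClosable.leIsClosable
      domRestrict_le).mapsTo_closure_graph hclos.closure_isClosed
      C.continuous_prodMap fun p hp => hsym'.prodMap_mem_graph ?_ ?_
    · rw [hadj]
      exact le_graph_of_le domRestrict_le hp
    · exact hCF _ (mem_domain_of_mem_graph hp).1
  refine ⟨hsym', fun y hy => ?_⟩
  have h := hmaps (T†.mem_graph ⟨C.toFun y, hadj ▸ hy⟩)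
  rw [Prod.map, C.invol] at h
  exact mem_domain_of_mem_graph h
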